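/- arXiv:2108.08001 — 4 statements merged into one kernel-verified Lean document; each statement's English description precedes it below -/
import Mathlib

section
/- Suppose f : ℝᴺ × ℝⁿ × ℝ → ℝᴺ is a uniform contraction in its first argument with constant θ ∈ (0,1) (in the Euclidean norm) and has image contained in a compact set K ⊆ ℝᴺ. Then for any bi-infinite sequences u : ℤ → ℝⁿ and e : ℤ → ℝ there exists a unique bounded bi-infinite sequence x* : ℤ → ℝᴺ satisfying x*_{k+1} = f(x*_k, u_k, e_k) for all k ∈ ℤ. -/
/-!
A bi-infinite orbit of the nonautonomous system `x (k+1) = g k (x k)` is the same thing as a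
fixed point of the operator `(T x) k = g (k-1) (x (k-1))`. When the ranges of the `g k` lie in a
common bounded set, `T` acts on the complete space `ℤ →ᵇ E` of bounded sequences, and a uniform
Lipschitz constant `K < 1` of the `g k` makes `T` a contraction there; Banach's fixed point theorem
then gives exactly one bounded orbit.
-/

open Set Bornology Metric

namespace BoundedContinuousFunction

variable {E : Type*} [MetricSpace E] (g : ℤ → E → E) (hg : IsBounded (⋃ k, range (g k)))

noncomputable def orbitShift (x : ℤ →ᵇ E) : ℤ →ᵇ E :=
  mkOfDiscrete (fun k => g (k - 1) (x (k - 1))) (diam (⋃ k, range (g k))) fun _ _ =>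
    dist_le_diam_of_mem hg (mem_iUnion_of_mem _ (mem_range_self _))
      (mem_iUnion_of_mem _ (mem_range_self _))

@[simp]
theorem orbitShift_apply (x : ℤ →ᵇ E) (k : ℤ) : orbitShift g hg x k = g (k - 1) (x (k - 1)) :=
  rfl

theorem isFixedPt_orbitShift_iff {x : ℤ →ᵇ E} :
    Function.IsFixedPt (orbitShift g hg) x ↔ ∀ k, x (k + 1) = g k (x k) := by
  refine ⟨fun hx k => ?_, fun hx => ext fun k => ?_⟩
  · simpa using (DFunLike.congr_fun hx (k + 1)).symm
  · simpa using (hx (k - 1)).symm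

theorem lipschitzWith_orbitShift {K : NNReal} (hK : ∀ k, LipschitzWith K (g k)) :
    LipschitzWith K (orbitShift g hg) :=
  LipschitzWith.of_dist_le_mul fun x y =>
    (dist_le (by positivity)).2 fun k =>
      ((hK (k - 1)).dist_le_mul _ _).trans (by gcongr; exact dist_coe_le_dist _)

theorem existsUnique_bounded_orbit [CompleteSpace E] [Nonempty E]
    (hg : IsBounded (⋃ k, range (g k))) {K : NNReal} (hK1 : K < 1)
    (hK : ∀ k, LipschitzWith K (g k)) :
    ∃! x : ℤ → E, (∀ k, x (k + 1) = g k (x k)) ∧ IsBounded (range x) := by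
  have : Nonempty (ℤ →ᵇ E) := ⟨const ℤ (Classical.arbitrary E)⟩
  have hT : ContractingWith K (orbitShift g hg) := ⟨hK1, lipschitzWith_orbitShift g hg hK⟩
  refine ⟨hT.fixedPoint, ⟨(isFixedPt_orbitShift_iff g hg).1 hT.fixedPoint_isFixedPt,
    isBounded_range_iff.2 (hT.fixedPoint).bounded⟩, ?_⟩
  rintro y ⟨hy, hbdd⟩
  obtain ⟨C, hC⟩ := isBounded_range_iff.1 hbdd
  exact congr_arg DFunLike.coe
    (hT.fixedPoint_unique ((isFixedPt_orbitShift_iff g hg (x := mkOfDiscrete y C hC)).2 hy))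

end BoundedContinuousFunction

/-- a uniform state contraction with compactly contained image admits, for any
bi-infinite inputs, a unique bounded bi-infinite solution x* of x_{k+1} = f(x_k, u_k, e_k). -/
theorem stmt2 {N n : ℕ} (θ : ℝ) (hθ : θ ∈ Set.Ioo (0:ℝ) 1)
    (f : EuclideanSpace ℝ (Fin N) → EuclideanSpace ℝ (Fin n) → ℝ → EuclideanSpace ℝ (Fin N))
    (hcontr : ∀ (u : EuclideanSpace ℝ (Fin n)) (e : ℝ) (x₁ x₂ : EuclideanSpace ℝ (Fin N)),
      ‖f x₁ u e - f x₂ u e‖ ≤ θ * ‖x₁ - x₂‖)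
    (K : Set (EuclideanSpace ℝ (Fin N))) (hK : IsCompact K)
    (hrange : ∀ x u e, f x u e ∈ K)
    (u : ℤ → EuclideanSpace ℝ (Fin n)) (e : ℤ → ℝ) :
    ∃! x : ℤ → EuclideanSpace ℝ (Fin N),
      (∀ k : ℤ, x (k+1) = f (x k) (u k) (e k)) ∧ (∃ M : ℝ, ∀ k : ℤ, ‖x k‖ ≤ M) := by
  have hbdd : IsBounded (⋃ k, range fun x => f x (u k) (e k)) :=
    hK.isBounded.subset (iUnion_subset fun k => range_subset_iff.2 fun x => hrange _ _ _)
  have hlip (k : ℤ) : LipschitzWith θ.toNNReal fun x => f x (u k) (e k) :=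
    LipschitzWith.of_dist_le' fun x₁ x₂ => by simpa only [dist_eq_norm] using hcontr _ _ x₁ x₂
  simpa only [isBounded_iff_forall_norm_le, forall_mem_range] using
    BoundedContinuousFunction.existsUnique_bounded_orbit _ hbdd (Real.toNNReal_lt_one.2 hθ.2) hlip
end

section
/- Let f : ℝᴺ × ℝⁿ × ℝ → ℝᴺ be a uniform contraction in its first argument with constant θ ∈ (0,1), with image contained in a compact set, and let h : ℝᴺ → ℝ be uniformly continuous. Fix bi-infinite inputs u : ℤ → ℝⁿ, e : ℤ → ℝ, a time k ∈ ℤ, and an initial condition ξ ∈ ℝᴺ. For k₀ ≤ k let φ(k; k₀, ξ) denote the solution at time k of x_{j+1} = f(x_j, u_j, e_j) started at x_{k₀} = ξ. Then the sequence {h(φ(k; k₀, ξ))}_{k₀ ≤ k} converges as k₀ → −∞, and the limit is independent of ξ. -/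
/-- The forward solution: `sol f u e ξ k₀ m = φ(k₀+m; k₀, ξ)`. -/
noncomputable def sol {N n : ℕ}
    (f : EuclideanSpace ℝ (Fin N) → EuclideanSpace ℝ (Fin n) → ℝ → EuclideanSpace ℝ (Fin N))
    (u : ℤ → EuclideanSpace ℝ (Fin n)) (e : ℤ → ℝ)
    (ξ : EuclideanSpace ℝ (Fin N)) (k₀ : ℤ) : ℕ → EuclideanSpace ℝ (Fin N)
  | 0 => ξ
  | m + 1 => f (sol f u e ξ k₀ m) (u (k₀ + m)) (e (k₀ + m))

/-!
Write `x_j(ξ) = φ(k; k - j, ξ)`. Since `x_{j+1}(ξ) = x_j(f(ξ, u, e))` and solutions over `j` steps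
contract distances by `θ ^ j`, consecutive terms differ by at most `θ ^ j` times the distance from
`ξ` to the bounded image of `f`; so `x_j(ξ)` is Cauchy, and its limit does not depend on `ξ`
because `dist (x_j ξ) (x_j ξ') ≤ θ ^ j * dist ξ ξ'`. Continuity of `h` finishes the proof.
-/

open Filter Topology

section Solution

variable {N n : ℕ}
  {f : EuclideanSpace ℝ (Fin N) → EuclideanSpace ℝ (Fin n) → ℝ → EuclideanSpace ℝ (Fin N)}
  {u : ℤ → EuclideanSpace ℝ (Fin n)} {e : ℤ → ℝ} {θ : ℝ}

theorem sol_succ_eq_sol_step (m : ℕ) (ξ : EuclideanSpace ℝ (Fin N)) (k₀ : ℤ) :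
    sol f u e ξ k₀ (m + 1) = sol f u e (f ξ (u k₀) (e k₀)) (k₀ + 1) m := by
  induction m with
  | zero => simp [sol]
  | succ m ih =>
    change f (sol f u e ξ k₀ (m + 1)) (u (k₀ + (m + 1 : ℕ))) (e (k₀ + (m + 1 : ℕ))) =
      f (sol f u e (f ξ (u k₀) (e k₀)) (k₀ + 1) m) (u (k₀ + 1 + m)) (e (k₀ + 1 + m))
    rw [ih]
    congr 2 <;> push_cast <;> ring

theorem dist_sol_le (hθ : 0 ≤ θ)
    (hcontr : ∀ (u : EuclideanSpace ℝ (Fin n)) (e : ℝ) (x₁ x₂ : EuclideanSpace ℝ (Fin N)),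
      ‖f x₁ u e - f x₂ u e‖ ≤ θ * ‖x₁ - x₂‖)
    (ξ ξ' : EuclideanSpace ℝ (Fin N)) (k₀ : ℤ) (m : ℕ) :
    dist (sol f u e ξ k₀ m) (sol f u e ξ' k₀ m) ≤ θ ^ m * dist ξ ξ' := by
  induction m with
  | zero => simp [sol]
  | succ m ih =>
    calc dist (sol f u e ξ k₀ (m + 1)) (sol f u e ξ' k₀ (m + 1))
        ≤ θ * dist (sol f u e ξ k₀ m) (sol f u e ξ' k₀ m) := by
          rw [dist_eq_norm, dist_eq_norm]
          exact hcontr _ _ _ _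
      _ ≤ θ * (θ ^ m * dist ξ ξ') := by gcongr
      _ = θ ^ (m + 1) * dist ξ ξ' := by ring

theorem dist_sol_backward_succ_le (hθ : 0 ≤ θ)
    (hcontr : ∀ (u : EuclideanSpace ℝ (Fin n)) (e : ℝ) (x₁ x₂ : EuclideanSpace ℝ (Fin N)),
      ‖f x₁ u e - f x₂ u e‖ ≤ θ * ‖x₁ - x₂‖)
    {R : ℝ} (hR : ∀ x u e, ‖f x u e‖ ≤ R) (ξ : EuclideanSpace ℝ (Fin N)) (k : ℤ) (j : ℕ) :
    dist (sol f u e ξ (k - j) j) (sol f u e ξ (k - (j + 1 : ℕ)) (j + 1)) ≤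
      (‖ξ‖ + R) * θ ^ j := by
  have hstart : k - (j + 1 : ℕ) + 1 = k - j := by push_cast; ring
  rw [sol_succ_eq_sol_step, hstart]
  calc _ ≤ θ ^ j * dist ξ (f ξ (u (k - (j + 1 : ℕ))) (e (k - (j + 1 : ℕ)))) :=
        dist_sol_le hθ hcontr _ _ _ _
    _ ≤ θ ^ j * (‖ξ‖ + R) := by
        gcongr
        exact (dist_le_norm_add_norm _ _).trans (by gcongr; exact hR _ _ _)
    _ = (‖ξ‖ + R) * θ ^ j := mul_comm _ _

theorem exists_tendsto_sol_backward (hθ₀ : 0 ≤ θ) (hθ₁ : θ < 1)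
    (hcontr : ∀ (u : EuclideanSpace ℝ (Fin n)) (e : ℝ) (x₁ x₂ : EuclideanSpace ℝ (Fin N)),
      ‖f x₁ u e - f x₂ u e‖ ≤ θ * ‖x₁ - x₂‖)
    {R : ℝ} (hR : ∀ x u e, ‖f x u e‖ ≤ R) (k : ℤ) :
    ∃ L, ∀ ξ, Tendsto (fun j : ℕ => sol f u e ξ (k - j) j) atTop (𝓝 L) := by
  have hcauchy : CauchySeq fun j : ℕ => sol f u e 0 (k - j) j :=
    cauchySeq_of_le_geometric θ _ hθ₁ (dist_sol_backward_succ_le hθ₀ hcontr hR 0 k)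
  obtain ⟨L, hL⟩ := cauchySeq_tendsto_of_complete hcauchy
  refine ⟨L, fun ξ => hL.congr_dist (squeeze_zero (fun _ => dist_nonneg)
    (fun j => dist_sol_le hθ₀ hcontr 0 ξ (k - j) j) ?_)⟩
  simpa using (tendsto_pow_atTop_nhds_zero_of_lt_one hθ₀ hθ₁).mul_const (dist 0 ξ)

end Solution

/-- for a uniform contraction f with compactly contained image and uniformly
continuous h, the sequence h(φ(k; k₀, ξ)) converges as k₀ → −∞ (here k₀ = k − j, j → ∞),
with limit independent of the initial condition ξ. -/
theorem stmt3 {N n : ℕ} (θ : ℝ) (hθ : θ ∈ Set.Ioo (0:ℝ) 1)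
    (f : EuclideanSpace ℝ (Fin N) → EuclideanSpace ℝ (Fin n) → ℝ → EuclideanSpace ℝ (Fin N))
    (hcontr : ∀ (u : EuclideanSpace ℝ (Fin n)) (e : ℝ) (x₁ x₂ : EuclideanSpace ℝ (Fin N)),
      ‖f x₁ u e - f x₂ u e‖ ≤ θ * ‖x₁ - x₂‖)
    (K : Set (EuclideanSpace ℝ (Fin N))) (hK : IsCompact K)
    (hrange : ∀ x u e, f x u e ∈ K)
    (h : EuclideanSpace ℝ (Fin N) → ℝ) (hh : UniformContinuous h)
    (u : ℤ → EuclideanSpace ℝ (Fin n)) (e : ℤ → ℝ) (k : ℤ) :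
    ∃ l : ℝ, ∀ ξ : EuclideanSpace ℝ (Fin N),
      Filter.Tendsto (fun j : ℕ => h (sol f u e ξ (k - j) j)) Filter.atTop (nhds l) := by
  obtain ⟨R, hKR⟩ := hK.isBounded.subset_closedBall 0
  have hR : ∀ x u e, ‖f x u e‖ ≤ R := fun x u e => mem_closedBall_zero_iff.mp (hKR (hrange x u e))
  obtain ⟨L, hL⟩ := exists_tendsto_sol_backward (u := u) (e := e) hθ.1.le hθ.2 hcontr hR k
  exact ⟨h L, fun ξ => (hh.continuous.tendsto L).comp (hL ξ)⟩
end

section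
/- Under the hypotheses of the previous statement (f a uniform contraction in its first argument with compact image, h uniformly continuous), define F(u,e,k) := lim_{k₀→−∞} h(φ(k; k₀, ξ)) (independent of ξ). Then F(u,e,k) = h(x*_k), where x* is the unique bounded bi-infinite solution of x_{j+1} = f(x_j, u_j, e_j). -/
/-- the limit F(u,e,k) = lim_{k₀→−∞} h(φ(k;k₀,ξ)) equals h(x*_k), where x* is
the unique bounded bi-infinite solution. -/
theorem stmt4 {N n : ℕ} (θ : ℝ) (hθ : θ ∈ Set.Ioo (0:ℝ) 1)
    (f : EuclideanSpace ℝ (Fin N) → EuclideanSpace ℝ (Fin n) → ℝ → EuclideanSpace ℝ (Fin N))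
    (hcontr : ∀ (u : EuclideanSpace ℝ (Fin n)) (e : ℝ) (x₁ x₂ : EuclideanSpace ℝ (Fin N)),
      ‖f x₁ u e - f x₂ u e‖ ≤ θ * ‖x₁ - x₂‖)
    (K : Set (EuclideanSpace ℝ (Fin N))) (hK : IsCompact K)
    (hrange : ∀ x u e, f x u e ∈ K)
    (h : EuclideanSpace ℝ (Fin N) → ℝ) (hh : UniformContinuous h)
    (u : ℤ → EuclideanSpace ℝ (Fin n)) (e : ℤ → ℝ) (k : ℤ)
    (xs : ℤ → EuclideanSpace ℝ (Fin N))
    (hxs : ∀ j : ℤ, xs (j+1) = f (xs j) (u j) (e j))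
    (hbdd : ∃ M : ℝ, ∀ j : ℤ, ‖xs j‖ ≤ M)
    (ξ : EuclideanSpace ℝ (Fin N)) (F : ℝ)
    (hF : Filter.Tendsto (fun j : ℕ => h (sol f u e ξ (k - j) j)) Filter.atTop (nhds F)) :
    F = h (xs k) := by
  obtain ⟨M, hM⟩ := hbdd
  -- key estimate
  have key : ∀ (k₀ : ℤ) (m : ℕ),
      ‖sol f u e ξ k₀ m - xs (k₀ + m)‖ ≤ θ ^ m * ‖ξ - xs k₀‖ := by
    intro k₀ m
    induction m with
    | zero => simp [sol]
    | succ m ih =>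
      have hx : xs (k₀ + (m + 1 : ℕ)) = f (xs (k₀ + m)) (u (k₀ + m)) (e (k₀ + m)) := by
        have h2 : (k₀ + ((m : ℤ) + 1)) = (k₀ + m) + 1 := by ring
        push_cast
        rw [h2, hxs (k₀ + m)]
      calc ‖sol f u e ξ k₀ (m+1) - xs (k₀ + (m+1 : ℕ))‖
          = ‖f (sol f u e ξ k₀ m) (u (k₀+m)) (e (k₀+m))
              - f (xs (k₀+m)) (u (k₀+m)) (e (k₀+m))‖ := by rw [hx]; rfl
        _ ≤ θ * ‖sol f u e ξ k₀ m - xs (k₀ + m)‖ := hcontr _ _ _ _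
        _ ≤ θ * (θ ^ m * ‖ξ - xs k₀‖) := by
            exact mul_le_mul_of_nonneg_left ih hθ.1.le
        _ = θ ^ (m+1) * ‖ξ - xs k₀‖ := by ring
  have hbound : ∀ j : ℕ, ‖sol f u e ξ (k - j) j - xs k‖ ≤ θ ^ j * (‖ξ‖ + M) := by
    intro j
    have h1 := key (k - j) j
    have h2 : (k - j) + (j : ℤ) = k := by ring
    rw [h2] at h1
    refine h1.trans ?_
    apply mul_le_mul_of_nonneg_left _ (pow_nonneg hθ.1.le j)
    calc ‖ξ - xs (k - j)‖ ≤ ‖ξ‖ + ‖xs (k - j)‖ := norm_sub_le _ _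
      _ ≤ ‖ξ‖ + M := by linarith [hM (k - j)]
  have htend : Filter.Tendsto (fun j : ℕ => sol f u e ξ (k - j) j) Filter.atTop (nhds (xs k)) := by
    rw [tendsto_iff_norm_sub_tendsto_zero]
    have hz : Filter.Tendsto (fun j : ℕ => θ ^ j * (‖ξ‖ + M)) Filter.atTop (nhds 0) := by
      have := (tendsto_pow_atTop_nhds_zero_of_lt_one hθ.1.le hθ.2).mul_const (‖ξ‖ + M)
      simpa using this
    exact squeeze_zero (fun j => norm_nonneg _) hbound hz
  have hFh : Filter.Tendsto (fun j : ℕ => h (sol f u e ξ (k - j) j)) Filter.atTop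
      (nhds (h (xs k))) := (hh.continuous.tendsto _).comp htend
  exact tendsto_nhds_unique hF hFh
end

section
/- Let T₁, T₂ be linear maps on the space of complex d×d matrices satisfying ‖T₁ − T₂‖_{1−1} ≤ 2, let g : ℝ → ℝ be L-Lipschitz with 0 ≤ g ≤ 1, and let ε ∈ (0,1). Consider the map Φ_y(ρ) := (1−ε)[g(y)T₁(ρ) + (1−g(y))T₂(ρ)] + ε ρ*, where ρ* is a fixed density matrix and T₁, T₂ are trace-norm contractive (‖Tᵢ‖_{1−1} ≤ 1). Suppose y depends on ρ linearly via y(ρ) = Σᵢ Wᵢ Tr(Zᵢ ρ) + W_c with ‖Zᵢ‖ ≤ 1 (operator norm). Then for all density matrices ρ₁, ρ₂, ‖Φ_{y(ρ₁)}(ρ₁) − Φ_{y(ρ₂)}(ρ₂)‖₁ ≤ ((1−ε) + 2L(1−ε)Σᵢ|Wᵢ|) ‖ρ₁ − ρ₂‖₁. -/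
open scoped ComplexOrder
/-- The trace norm ‖A‖₁ = Tr √(AᴴA), computed as the sum of the square roots of the
eigenvalues of AᴴA. -/
noncomputable def traceNorm {d : ℕ} (A : Matrix (Fin d) (Fin d) ℂ) : ℝ :=
  ∑ i, Real.sqrt ((Matrix.isHermitian_conjTranspose_mul_self A).eigenvalues i)

/-!
The trace norm is dual to the operator norm: `|Tr (B A)| ≤ ‖B‖ ‖A‖₁`, with equality at the
contraction `B = (AᴴA)^{-1/2} Aᴴ`. Duality gives the triangle inequality, homogeneity and
`‖ρ‖₁ ≤ Tr ρ = 1` for states, and makes the readout `y` Lipschitz with constant `Σᵢ |Wᵢ|`.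
With `gₖ = g (y ρₖ)` the fixed state `ρ*` cancels and
`Φ(ρ₁) - Φ(ρ₂) = (1 - ε) (g₁ T₁ (ρ₁ - ρ₂) + (1 - g₁) T₂ (ρ₁ - ρ₂) + (g₁ - g₂) (T₁ - T₂) ρ₂)`:
the convex combination is a trace-norm contraction and the last term costs `2 L |y ρ₁ - y ρ₂|`.
-/

open scoped Matrix.Norms.L2Operator InnerProductSpace
open Matrix

namespace Matrix
variable {n ι : Type*} [Fintype n] [DecidableEq n] [Fintype ι]

lemma trace_eq_sum_inner_toEuclideanCLM (M : Matrix n n ℂ)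
    (b : OrthonormalBasis ι ℂ (EuclideanSpace ℂ n)) :
    M.trace = ∑ i, ⟪b i, toEuclideanCLM (𝕜 := ℂ) M (b i)⟫_ℂ := by
  have := LinearMap.trace_eq_sum_inner (toEuclideanCLM (𝕜 := ℂ) M : _ →ₗ[ℂ] _) b
  rwa [LinearMap.trace_eq_matrix_trace ℂ (EuclideanSpace.basisFun n ℂ).toBasis,
    coe_toEuclideanCLM_eq_toEuclideanLin, toEuclideanLin_eq_toLin_orthonormal,
    LinearMap.toMatrix_toLin] at this

lemma norm_trace_mul_le_sum_norm (B M : Matrix n n ℂ)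
    (b : OrthonormalBasis ι ℂ (EuclideanSpace ℂ n)) :
    ‖(B * M).trace‖ ≤ ‖B‖ * ∑ i, ‖toEuclideanCLM (𝕜 := ℂ) M (b i)‖ := by
  rw [trace_eq_sum_inner_toEuclideanCLM _ b, Finset.mul_sum]
  refine (norm_sum_le _ _).trans (Finset.sum_le_sum fun i _ => ?_)
  calc ‖⟪b i, toEuclideanCLM (𝕜 := ℂ) (B * M) (b i)⟫_ℂ‖
      ≤ ‖b i‖ * ‖toEuclideanCLM (𝕜 := ℂ) B (toEuclideanCLM (𝕜 := ℂ) M (b i))‖ :=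
        by rw [map_mul]; exact norm_inner_le_norm _ _
    _ ≤ ‖B‖ * ‖toEuclideanCLM (𝕜 := ℂ) M (b i)‖ := by
        rw [b.orthonormal.1 i, one_mul]; exact (toEuclideanCLM (𝕜 := ℂ) B).le_opNorm _

lemma IsHermitian.toEuclideanCLM_eigenvectorBasis {M : Matrix n n ℂ} (hM : M.IsHermitian)
    (i : n) : toEuclideanCLM (𝕜 := ℂ) M (hM.eigenvectorBasis i) =
      hM.eigenvalues i • hM.eigenvectorBasis i := by
  ext1
  simp [hM.mulVec_eigenvectorBasis]

lemma IsHermitian.norm_toEuclideanCLM_eigenvectorBasis {M : Matrix n n ℂ} (hM : M.IsHermitian)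
    (i : n) : ‖toEuclideanCLM (𝕜 := ℂ) M (hM.eigenvectorBasis i)‖ = |hM.eigenvalues i| := by
  rw [hM.toEuclideanCLM_eigenvectorBasis, norm_smul, hM.eigenvectorBasis.orthonormal.1 i,
    mul_one, Real.norm_eq_abs]

lemma norm_toEuclideanCLM_eigenvectorBasis_conjTranspose_mul_self (A : Matrix n n ℂ) (i : n) :
    ‖toEuclideanCLM (𝕜 := ℂ) A ((isHermitian_conjTranspose_mul_self A).eigenvectorBasis i)‖ =
      √((isHermitian_conjTranspose_mul_self A).eigenvalues i) := by
  set hH := isHermitian_conjTranspose_mul_self A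
  set v := hH.eigenvectorBasis i
  have hAv : ‖toEuclideanCLM (𝕜 := ℂ) A v‖ ^ 2 = hH.eigenvalues i := by
    have hHv := hH.toEuclideanCLM_eigenvectorBasis i
    have hadj : toEuclideanCLM (𝕜 := ℂ) Aᴴ =
        ContinuousLinearMap.adjoint (toEuclideanCLM (𝕜 := ℂ) A) := map_star _ A
    rw [map_mul, mul_apply_eq_comp, hadj] at hHv
    rw [@norm_sq_eq_re_inner ℂ, ← ContinuousLinearMap.adjoint_inner_right, hHv,
      RCLike.real_smul_eq_coe_smul (K := ℂ), inner_smul_right, inner_self_eq_norm_sq_to_K,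
      hH.eigenvectorBasis.orthonormal.1 i]
    simp
  rw [← hAv, Real.sqrt_sq (norm_nonneg _)]

lemma IsHermitian.trace_cfc {M : Matrix n n ℂ} (hM : M.IsHermitian) (f : ℝ → ℝ) :
    (cfc f M).trace = ∑ i, (f (hM.eigenvalues i) : ℂ) := by
  rw [hM.cfc_eq, IsHermitian.cfc, Unitary.conjStarAlgAut_apply, trace_mul_cycle,
    Unitary.coe_star_mul_self, one_mul, trace_diagonal]
  rfl

end Matrix

section
variable {d : ℕ}

lemma traceNorm_nonneg (A : Matrix (Fin d) (Fin d) ℂ) : 0 ≤ traceNorm A :=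
  Finset.sum_nonneg fun _ _ => Real.sqrt_nonneg _

lemma norm_trace_mul_le_traceNorm (B A : Matrix (Fin d) (Fin d) ℂ) :
    ‖(B * A).trace‖ ≤ ‖B‖ * traceNorm A := by
  simpa [norm_toEuclideanCLM_eigenvectorBasis_conjTranspose_mul_self, traceNorm] using
    norm_trace_mul_le_sum_norm B A (isHermitian_conjTranspose_mul_self A).eigenvectorBasis

lemma exists_norm_le_one_trace_mul_eq_traceNorm (A : Matrix (Fin d) (Fin d) ℂ) :
    ∃ C : Matrix (Fin d) (Fin d) ℂ, ‖C‖ ≤ 1 ∧ (C * A).trace = traceNorm A := by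
  set H := Aᴴ * A
  have hH : H.IsHermitian := isHermitian_conjTranspose_mul_self A
  have hcont (f : ℝ → ℝ) : ContinuousOn f (spectrum ℝ H) := H.finite_real_spectrum.continuousOn f
  -- `(√0)⁻¹ = 0`, so `S` inverts `√H` on its range and vanishes on its kernel; accordingly
  -- `(√x)⁻¹ * x = √x` holds for every real `x`.
  set S := cfc (fun x : ℝ => (√x)⁻¹) H
  refine ⟨S * Aᴴ, ?_, ?_⟩
  · have hS : star S = S := (cfc_predicate _ H : IsSelfAdjoint S)
    have hCCstar : S * Aᴴ * star (S * Aᴴ) = cfc (fun x : ℝ => (√x)⁻¹ * x * (√x)⁻¹) H := by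
      rw [cfc_mul (fun x => (√x)⁻¹ * x) (fun x => (√x)⁻¹) H (hcont _) (hcont _),
        cfc_mul (fun x => (√x)⁻¹) (fun x => x) H (hcont _) (hcont _), cfc_id' ℝ H,
        star_mul, hS, star_eq_conjTranspose, conjTranspose_conjTranspose]
      simp only [H, mul_assoc]
      rfl
    have hnorm_sq : ‖S * Aᴴ‖ * ‖S * Aᴴ‖ ≤ 1 := by
      rw [← CStarRing.norm_self_mul_star, hCCstar]
      refine norm_cfc_le zero_le_one fun x _ => ?_
      rw [inv_mul_eq_div, Real.div_sqrt, Real.norm_eq_abs, abs_of_nonneg (by positivity)]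
      exact mul_inv_le_one
    nlinarith [norm_nonneg (S * Aᴴ)]
  · have : S * Aᴴ * A = cfc Real.sqrt H := calc
      S * Aᴴ * A = cfc (fun x => (√x)⁻¹ * x) H := by
        rw [cfc_mul (fun x => (√x)⁻¹) (fun x => x) H (hcont _) (hcont _), cfc_id' ℝ H, mul_assoc]
      _ = cfc Real.sqrt H := by simp only [inv_mul_eq_div, Real.div_sqrt]
    rw [this, hH.trace_cfc, traceNorm]
    push_cast
    rfl

lemma traceNorm_add_le (A B : Matrix (Fin d) (Fin d) ℂ) :
    traceNorm (A + B) ≤ traceNorm A + traceNorm B := by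
  obtain ⟨C, hC, hCAB⟩ := exists_norm_le_one_trace_mul_eq_traceNorm (A + B)
  have hA := norm_trace_mul_le_traceNorm C A
  have hB := norm_trace_mul_le_traceNorm C B
  calc traceNorm (A + B) = ‖(C * A).trace + (C * B).trace‖ := by
        rw [← trace_add, ← mul_add, hCAB, Complex.norm_real,
          Real.norm_of_nonneg (traceNorm_nonneg _)]
    _ ≤ ‖C‖ * traceNorm A + ‖C‖ * traceNorm B := (norm_add_le _ _).trans (add_le_add hA hB)
    _ ≤ traceNorm A + traceNorm B := by
        nlinarith [traceNorm_nonneg A, traceNorm_nonneg B]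

lemma traceNorm_smul_le (r : ℝ) (A : Matrix (Fin d) (Fin d) ℂ) :
    traceNorm (r • A) ≤ |r| * traceNorm A := by
  obtain ⟨C, hC, hCA⟩ := exists_norm_le_one_trace_mul_eq_traceNorm (r • A)
  calc traceNorm (r • A) = |r| * ‖(C * A).trace‖ := by
        rw [← Real.norm_eq_abs, ← norm_smul, ← trace_smul, ← mul_smul_comm, hCA, Complex.norm_real,
          Real.norm_of_nonneg (traceNorm_nonneg _)]
    _ ≤ |r| * (‖C‖ * traceNorm A) := by gcongr; exact norm_trace_mul_le_traceNorm C A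
    _ ≤ |r| * traceNorm A := by
        gcongr; nlinarith [traceNorm_nonneg A]

lemma traceNorm_le_re_trace_of_posSemidef {ρ : Matrix (Fin d) (Fin d) ℂ} (hρ : ρ.PosSemidef) :
    traceNorm ρ ≤ ρ.trace.re := by
  obtain ⟨C, hC, hCρ⟩ := exists_norm_le_one_trace_mul_eq_traceNorm ρ
  set hρH := hρ.isHermitian
  have hsum := norm_trace_mul_le_sum_norm C ρ hρH.eigenvectorBasis
  simp only [hρH.norm_toEuclideanCLM_eigenvectorBasis, abs_of_nonneg (hρ.eigenvalues_nonneg _),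
    hCρ, Complex.norm_real, Real.norm_of_nonneg (traceNorm_nonneg _)] at hsum
  have hnonneg : 0 ≤ ∑ i, hρH.eigenvalues i := Finset.sum_nonneg fun i _ => hρ.eigenvalues_nonneg i
  have htr : ρ.trace.re = ∑ i, hρH.eigenvalues i := by simp [hρH.trace_eq_sum_eigenvalues]
  nlinarith

lemma abs_sum_mul_re_trace_le {ι : Type*} [Fintype ι] (W : ι → ℝ)
    (Z : ι → Matrix (Fin d) (Fin d) ℂ) (hZ : ∀ i, ‖Z i‖ ≤ 1) (Δ : Matrix (Fin d) (Fin d) ℂ) :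
    |∑ i, W i * (Z i * Δ).trace.re| ≤ (∑ i, |W i|) * traceNorm Δ := by
  rw [Finset.sum_mul]
  refine (Finset.abs_sum_le_sum_abs _ _).trans (Finset.sum_le_sum fun i _ => ?_)
  rw [abs_mul]
  gcongr
  calc |(Z i * Δ).trace.re| ≤ ‖Z i‖ * traceNorm Δ :=
        (Complex.abs_re_le_norm _).trans (norm_trace_mul_le_traceNorm _ _)
    _ ≤ traceNorm Δ := by nlinarith [hZ i, traceNorm_nonneg Δ]

variable (T₁ T₂ : Matrix (Fin d) (Fin d) ℂ →ₗ[ℂ] Matrix (Fin d) (Fin d) ℂ)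

lemma traceNorm_convexCombination_apply_le (hT₁ : ∀ A, traceNorm (T₁ A) ≤ traceNorm A)
    (hT₂ : ∀ A, traceNorm (T₂ A) ≤ traceNorm A) {a : ℝ} (ha : a ∈ Set.Icc (0 : ℝ) 1)
    (A : Matrix (Fin d) (Fin d) ℂ) :
    traceNorm (a • T₁ A + (1 - a) • T₂ A) ≤ traceNorm A := by
  obtain ⟨ha₀, ha₁⟩ := ha
  calc traceNorm (a • T₁ A + (1 - a) • T₂ A)
      ≤ |a| * traceNorm (T₁ A) + |1 - a| * traceNorm (T₂ A) :=
        (traceNorm_add_le _ _).trans (add_le_add (traceNorm_smul_le _ _) (traceNorm_smul_le _ _))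
    _ ≤ a * traceNorm A + (1 - a) * traceNorm A := by
        rw [abs_of_nonneg ha₀, abs_of_nonneg (sub_nonneg.mpr ha₁)]
        gcongr
        exacts [hT₁ A, hT₂ A]
    _ = traceNorm A := by ring

lemma traceNorm_convexCombination_sub_le (hT₁ : ∀ A, traceNorm (T₁ A) ≤ traceNorm A)
    (hT₂ : ∀ A, traceNorm (T₂ A) ≤ traceNorm A)
    (hT₁₂ : ∀ A, traceNorm (T₁ A - T₂ A) ≤ 2 * traceNorm A)
    {a : ℝ} (ha : a ∈ Set.Icc (0 : ℝ) 1) (b : ℝ) (ρ₁ ρ₂ : Matrix (Fin d) (Fin d) ℂ) :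
    traceNorm (a • T₁ ρ₁ + (1 - a) • T₂ ρ₁ - (b • T₁ ρ₂ + (1 - b) • T₂ ρ₂)) ≤
      traceNorm (ρ₁ - ρ₂) + 2 * |a - b| * traceNorm ρ₂ := by
  have hsplit : a • T₁ ρ₁ + (1 - a) • T₂ ρ₁ - (b • T₁ ρ₂ + (1 - b) • T₂ ρ₂) =
      (a • T₁ (ρ₁ - ρ₂) + (1 - a) • T₂ (ρ₁ - ρ₂)) + (a - b) • (T₁ ρ₂ - T₂ ρ₂) := by
    simp only [map_sub]
    module
  calc _ ≤ traceNorm (ρ₁ - ρ₂) + |a - b| * traceNorm (T₁ ρ₂ - T₂ ρ₂) := by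
        rw [hsplit]
        exact (traceNorm_add_le _ _).trans <| add_le_add
          (traceNorm_convexCombination_apply_le T₁ T₂ hT₁ hT₂ ha _) (traceNorm_smul_le _ _)
    _ ≤ traceNorm (ρ₁ - ρ₂) + 2 * |a - b| * traceNorm ρ₂ := by
        nlinarith [hT₁₂ ρ₂, abs_nonneg (a - b)]

end

theorem stmt15_general {d N : ℕ}
    (T₁ T₂ : Matrix (Fin d) (Fin d) ℂ →ₗ[ℂ] Matrix (Fin d) (Fin d) ℂ)
    (hT1 : ∀ A, traceNorm (T₁ A) ≤ traceNorm A)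
    (hT2 : ∀ A, traceNorm (T₂ A) ≤ traceNorm A)
    (hT12 : ∀ A, traceNorm (T₁ A - T₂ A) ≤ 2 * traceNorm A)
    (g : ℝ → ℝ) (L : ℝ) (hL : 0 ≤ L)
    (hg : ∀ y₁ y₂ : ℝ, |g y₁ - g y₂| ≤ L * |y₁ - y₂|)
    (hg01 : ∀ s, g s ∈ Set.Icc (0:ℝ) 1)
    (ε : ℝ) (hε : ε ∈ Set.Ioo (0:ℝ) 1)
    (ρstar : Matrix (Fin d) (Fin d) ℂ)
    (W : Fin N → ℝ) (Wc : ℝ) (Z : Fin N → Matrix (Fin d) (Fin d) ℂ)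
    (hZ : ∀ i, ‖Matrix.toEuclideanCLM (𝕜 := ℂ) (Z i)‖ ≤ 1)
    (y : Matrix (Fin d) (Fin d) ℂ → ℝ)
    (hy : ∀ ρ, y ρ = (∑ i, W i * ((Z i * ρ).trace).re) + Wc)
    (Φ : ℝ → Matrix (Fin d) (Fin d) ℂ → Matrix (Fin d) (Fin d) ℂ)
    (hΦ : ∀ s ρ, Φ s ρ = (1 - ε) • (g s • T₁ ρ + (1 - g s) • T₂ ρ) + ε • ρstar)
    (ρ₁ ρ₂ : Matrix (Fin d) (Fin d) ℂ)
    (h₂ : ρ₂.PosSemidef ∧ ρ₂.trace = 1) :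
    traceNorm (Φ (y ρ₁) ρ₁ - Φ (y ρ₂) ρ₂) ≤
      ((1 - ε) + 2 * L * (1 - ε) * ∑ i, |W i|) * traceNorm (ρ₁ - ρ₂) := by
  set g₁ := g (y ρ₁)
  set g₂ := g (y ρ₂)
  have hε' : 0 ≤ 1 - ε := sub_nonneg.mpr hε.2.le
  have hρ₂ : traceNorm ρ₂ ≤ 1 := by
    simpa [h₂.2] using traceNorm_le_re_trace_of_posSemidef h₂.1
  have hy₁₂ : |y ρ₁ - y ρ₂| ≤ (∑ i, |W i|) * traceNorm (ρ₁ - ρ₂) := by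
    have : y ρ₁ - y ρ₂ = ∑ i, W i * (Z i * (ρ₁ - ρ₂)).trace.re := by
      simp only [hy, mul_sub, trace_sub, Complex.sub_re, Finset.sum_sub_distrib]
      ring
    exact this ▸ abs_sum_mul_re_trace_le W Z hZ _
  have hg₁₂ : |g₁ - g₂| * traceNorm ρ₂ ≤ L * ((∑ i, |W i|) * traceNorm (ρ₁ - ρ₂)) :=
    (mul_le_of_le_one_right (abs_nonneg _) hρ₂).trans
      ((hg _ _).trans (mul_le_mul_of_nonneg_left hy₁₂ hL))
  have hΦ₁₂ : Φ (y ρ₁) ρ₁ - Φ (y ρ₂) ρ₂ =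
      (1 - ε) • (g₁ • T₁ ρ₁ + (1 - g₁) • T₂ ρ₁ - (g₂ • T₁ ρ₂ + (1 - g₂) • T₂ ρ₂)) := by
    rw [hΦ, hΦ]
    module
  calc traceNorm (Φ (y ρ₁) ρ₁ - Φ (y ρ₂) ρ₂)
      ≤ (1 - ε) *
          traceNorm (g₁ • T₁ ρ₁ + (1 - g₁) • T₂ ρ₁ - (g₂ • T₁ ρ₂ + (1 - g₂) • T₂ ρ₂)) := by
        simpa only [hΦ₁₂, abs_of_nonneg hε'] using traceNorm_smul_le (1 - ε) _
    _ ≤ (1 - ε) * (traceNorm (ρ₁ - ρ₂) + 2 * |g₁ - g₂| * traceNorm ρ₂) := by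
        gcongr
        exact traceNorm_convexCombination_sub_le T₁ T₂ hT1 hT2 hT12 (hg01 _) _ ρ₁ ρ₂
    _ ≤ (1 - ε) * (traceNorm (ρ₁ - ρ₂) + 2 * (L * ((∑ i, |W i|) * traceNorm (ρ₁ - ρ₂)))) :=
        mul_le_mul_of_nonneg_left (by linarith) hε'
    _ = ((1 - ε) + 2 * L * (1 - ε) * ∑ i, |W i|) * traceNorm (ρ₁ - ρ₂) := by ring

/-- the feedback quantum reservoir map Φ_{y(ρ)}(ρ) is Lipschitz in trace norm
with constant (1−ε) + 2L(1−ε)Σᵢ|Wᵢ|. -/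
theorem stmt15 {d N : ℕ}
    (T₁ T₂ : Matrix (Fin d) (Fin d) ℂ →ₗ[ℂ] Matrix (Fin d) (Fin d) ℂ)
    (hT1 : ∀ A, traceNorm (T₁ A) ≤ traceNorm A)
    (hT2 : ∀ A, traceNorm (T₂ A) ≤ traceNorm A)
    (hT12 : ∀ A, traceNorm (T₁ A - T₂ A) ≤ 2 * traceNorm A)
    (g : ℝ → ℝ) (L : ℝ) (hL : 0 ≤ L)
    (hg : ∀ y₁ y₂ : ℝ, |g y₁ - g y₂| ≤ L * |y₁ - y₂|)
    (hg01 : ∀ s, g s ∈ Set.Icc (0:ℝ) 1)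
    (ε : ℝ) (hε : ε ∈ Set.Ioo (0:ℝ) 1)
    (ρstar : Matrix (Fin d) (Fin d) ℂ)
    (hρstar : ρstar.PosSemidef ∧ ρstar.trace = 1)
    (W : Fin N → ℝ) (Wc : ℝ) (Z : Fin N → Matrix (Fin d) (Fin d) ℂ)
    (hZ : ∀ i, ‖Matrix.toEuclideanCLM (𝕜 := ℂ) (Z i)‖ ≤ 1)
    (y : Matrix (Fin d) (Fin d) ℂ → ℝ)
    (hy : ∀ ρ, y ρ = (∑ i, W i * ((Z i * ρ).trace).re) + Wc)
    (Φ : ℝ → Matrix (Fin d) (Fin d) ℂ → Matrix (Fin d) (Fin d) ℂ)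
    (hΦ : ∀ s ρ, Φ s ρ = (1 - ε) • (g s • T₁ ρ + (1 - g s) • T₂ ρ) + ε • ρstar)
    (ρ₁ ρ₂ : Matrix (Fin d) (Fin d) ℂ)
    (h₁ : ρ₁.PosSemidef ∧ ρ₁.trace = 1) (h₂ : ρ₂.PosSemidef ∧ ρ₂.trace = 1) :
    traceNorm (Φ (y ρ₁) ρ₁ - Φ (y ρ₂) ρ₂) ≤
      ((1 - ε) + 2 * L * (1 - ε) * ∑ i, |W i|) * traceNorm (ρ₁ - ρ₂) :=
  stmt15_general T₁ T₂ hT1 hT2 hT12 g L hL hg hg01 ε hε ρstar W Wc Z hZ y hy Φ hΦ ρ₁ ρ₂ h₂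
end
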